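/- If u is a subsolution and v satisfies |v(x) - u(x)| ≤ λ_u(x) for all x, where λ_u(x) = (1/3)·min(T⁻u(x) - u(x), u(x) - T⁺u(x)) is the leverage function, then v is a subsolution; moreover if λ_u(x) > 0 then T⁺v(x) < v(x) < T⁻v(x) (v is free at x). -/

import Mathlib

noncomputable def Tm {M : Type*} (c : M × M → ℝ) (w : M → ℝ) : M → ℝ :=
  fun x => ⨅ y, (w y + c (y, x))

noncomputable def Tp {M : Type*} (c : M × M → ℝ) (w : M → ℝ) : M → ℝ :=
  fun x => ⨆ y, (w y - c (x, y))

/-- The leverage function of a subsolution `u`. -/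
noncomputable def leverage {M : Type*} (c : M × M → ℝ) (u : M → ℝ) : M → ℝ :=
  fun x => (1 / 3) * min (Tm c u x - u x) (u x - Tp c u x)

/-!
Write `λ = leverage c u`. Since `Tm c u y ≤ u x + c (x, y)` and `λ y ≤ (Tm c u y - u y) / 3`, a
perturbation `v` of `u` by at most `λ` satisfies `v y ≤ (2 u y + u x + c (x, y)) / 3`, and
symmetrically, through `Tp`, `v x ≥ (2 u x + u y - c (x, y)) / 3`. Subtracting gives
`v y - v x ≤ (u y - u x) / 3 + 2 c (x, y) / 3 ≤ c (x, y)`. Subtracting `c (x, y)` from the first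
bound and taking the supremum over `y` gives `Tp c v x ≤ (2 Tp c u x + u x) / 3`, while `v x ≥ (2 u x + Tp c u x) / 3`; these
are strictly ordered as soon as `Tp c u x < u x`, which holds when `λ x > 0`. The case of `Tm` is
symmetric.
-/

open Set

def IsSubsolution {M : Type*} (c : M × M → ℝ) (w : M → ℝ) : Prop :=
  ∀ x y, w y - w x ≤ c (x, y)

def IsFreeAt {M : Type*} (c : M × M → ℝ) (w : M → ℝ) (x : M) : Prop :=
  Tp c w x < w x ∧ w x < Tm c w x

section Operators

variable {M : Type*} {c : M × M → ℝ} {w : M → ℝ}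

theorem Tm_le (hc : BddBelow (range c)) (hw : BddBelow (range w)) (x y : M) :
    Tm c w x ≤ w y + c (y, x) := by
  obtain ⟨a, ha⟩ := hw
  obtain ⟨b, hb⟩ := hc
  refine ciInf_le ⟨a + b, ?_⟩ y
  rintro _ ⟨z, rfl⟩
  exact add_le_add (ha (mem_range_self z)) (hb (mem_range_self _))

theorem le_Tp (hc : BddBelow (range c)) (hw : BddAbove (range w)) (x y : M) :
    w y - c (x, y) ≤ Tp c w x := by
  obtain ⟨a, ha⟩ := hw
  obtain ⟨b, hb⟩ := hc
  refine le_ciSup (f := fun y => w y - c (x, y)) ⟨a - b, ?_⟩ y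
  rintro _ ⟨z, rfl⟩
  exact sub_le_sub (ha (mem_range_self z)) (hb (mem_range_self _))

theorem le_Tm {b : ℝ} (x : M) (h : ∀ y, b ≤ w y + c (y, x)) : b ≤ Tm c w x :=
  haveI : Nonempty M := ⟨x⟩
  le_ciInf h

theorem Tp_le {b : ℝ} (x : M) (h : ∀ y, w y - c (x, y) ≤ b) : Tp c w x ≤ b :=
  haveI : Nonempty M := ⟨x⟩
  ciSup_le h

end Operators

section Leverage

variable {M : Type*} {c : M × M → ℝ} {u v : M → ℝ}

theorem leverage_le_Tm_sub (x : M) : leverage c u x ≤ (Tm c u x - u x) / 3 := by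
  have := min_le_left (Tm c u x - u x) (u x - Tp c u x)
  simp only [leverage]
  linarith

theorem leverage_le_sub_Tp (x : M) : leverage c u x ≤ (u x - Tp c u x) / 3 := by
  have := min_le_right (Tm c u x - u x) (u x - Tp c u x)
  simp only [leverage]
  linarith

theorem apply_le_of_abs_sub_le_leverage (hv : ∀ x, |v x - u x| ≤ leverage c u x)
    (hc : BddBelow (range c)) (hu : BddBelow (range u)) (x y : M) :
    v y ≤ (2 * u y + u x + c (x, y)) / 3 := by
  have hvy := le_of_abs_le (hv y)
  have := leverage_le_Tm_sub (c := c) (u := u) y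
  have := Tm_le hc hu y x
  linarith

theorem le_apply_of_abs_sub_le_leverage (hv : ∀ x, |v x - u x| ≤ leverage c u x)
    (hc : BddBelow (range c)) (hu : BddAbove (range u)) (x y : M) :
    (2 * u x + u y - c (x, y)) / 3 ≤ v x := by
  have hvx := neg_le_of_abs_le (hv x)
  have := leverage_le_sub_Tp (c := c) (u := u) x
  have := le_Tp hc hu x y
  linarith

theorem isSubsolution_of_abs_sub_le_leverage (hv : ∀ x, |v x - u x| ≤ leverage c u x)
    (hc : BddBelow (range c)) (hu_below : BddBelow (range u)) (hu_above : BddAbove (range u))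
    (hsub : IsSubsolution c u) :
    IsSubsolution c v := by
  intro x y
  have := apply_le_of_abs_sub_le_leverage hv hc hu_below x y
  have := le_apply_of_abs_sub_le_leverage hv hc hu_above x y
  linarith [hsub x y]

theorem Tp_le_of_abs_sub_le_leverage (hv : ∀ x, |v x - u x| ≤ leverage c u x)
    (hc : BddBelow (range c)) (hu_below : BddBelow (range u)) (hu_above : BddAbove (range u))
    (x : M) :
    Tp c v x ≤ (2 * Tp c u x + u x) / 3 :=
  Tp_le x fun y => by
    have := apply_le_of_abs_sub_le_leverage hv hc hu_below x y
    have := le_Tp hc hu_above x y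
    linarith

theorem le_Tm_of_abs_sub_le_leverage (hv : ∀ x, |v x - u x| ≤ leverage c u x)
    (hc : BddBelow (range c)) (hu_below : BddBelow (range u)) (hu_above : BddAbove (range u))
    (x : M) :
    (2 * Tm c u x + u x) / 3 ≤ Tm c v x :=
  le_Tm x fun y => by
    have := le_apply_of_abs_sub_le_leverage hv hc hu_above y x
    have := Tm_le hc hu_below x y
    linarith

theorem isFreeAt_of_abs_sub_le_leverage (hv : ∀ x, |v x - u x| ≤ leverage c u x)
    (hc : BddBelow (range c)) (hu_below : BddBelow (range u)) (hu_above : BddAbove (range u))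
    {x : M}
    (hx : 0 < leverage c u x) : IsFreeAt c v x := by
  have hvx := abs_le.mp (hv x)
  have := Tp_le_of_abs_sub_le_leverage hv hc hu_below hu_above x
  have := le_Tm_of_abs_sub_le_leverage hv hc hu_below hu_above x
  have := leverage_le_Tm_sub (c := c) (u := u) x
  have := leverage_le_sub_Tp (c := c) (u := u) x
  constructor <;> linarith

end Leverage

theorem leverage_lemma_general {M : Type*}
    (c : M × M → ℝ) (u v : M → ℝ)
    (hc : ∃ K : ℝ, ∀ p, K ≤ c p) (hu : ∃ C : ℝ, ∀ x, |u x| ≤ C)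
    (hsub : ∀ x y, u y - u x ≤ c (x, y))
    (hv : ∀ x, |v x - u x| ≤ leverage c u x) :
    (∀ x y, v y - v x ≤ c (x, y)) ∧
    (∀ x, 0 < leverage c u x → Tp c v x < v x ∧ v x < Tm c v x) := by
  obtain ⟨K, hK⟩ := hc
  obtain ⟨C, hC⟩ := hu
  have hc_below : BddBelow (range c) := ⟨K, forall_mem_range.mpr hK⟩
  have hu_below : BddBelow (range u) := ⟨-C, forall_mem_range.mpr fun x => neg_le_of_abs_le (hC x)⟩
  have hu_above : BddAbove (range u) := ⟨C, forall_mem_range.mpr fun x => le_of_abs_le (hC x)⟩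
  exact ⟨isSubsolution_of_abs_sub_le_leverage hv hc_below hu_below hu_above hsub,
    fun x => isFreeAt_of_abs_sub_le_leverage hv hc_below hu_below hu_above⟩

theorem leverage_lemma {M : Type*} [Nonempty M]
    (c : M × M → ℝ) (u v : M → ℝ)
    (hc : ∃ K : ℝ, ∀ p, K ≤ c p) (hu : ∃ C : ℝ, ∀ x, |u x| ≤ C)
    (hsub : ∀ x y, u y - u x ≤ c (x, y))
    (hv : ∀ x, |v x - u x| ≤ leverage c u x) :
    (∀ x y, v y - v x ≤ c (x, y)) ∧
    (∀ x, 0 < leverage c u x → Tp c v x < v x ∧ v x < Tm c v x) :=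
  leverage_lemma_general c u v hc hu hsub hv
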